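/- Let A(ρ) = A₀ρ^m with A₀ > 0 and m > -3/2, m ≠ -1. Then the functions t(u,ρ) = λu²/2 + α₀u + α₂/ρ + λA₀²ρ^{2m+2}/(2(2m²+5m+3)) + t₀ and x(u,ρ) = [(m+1)(2m+3)(α₂u + ρ(λu³/3 + α₀u²/2 + x₀)) - A₀²ρ^{2m+3}(m(λu+α₀) + λu + 3α₀/2)]/(ρ(2m²+5m+3)) satisfy: the pullbacks of ω₁ = ρdt∧du + udt∧dρ - dx∧dρ and ω₂ = udt∧du + ρA₀²ρ^{2m}dt∧dρ - dx∧du under (u,ρ) ↦ (t(u,ρ),x(u,ρ),u,ρ) vanish identically for ρ > 0. -/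

import Mathlib

/- STATEMENT 15: Ideal-gas multivalued solution. For A(ρ) = A₀ρ^m (A₀ > 0,
   m > -3/2, m ≠ -1), the functions
   t(u,ρ) = λu²/2 + α₀u + α₂/ρ + λA₀²ρ^{2m+2}/(2(2m²+5m+3)) + t₀,
   x(u,ρ) = [(m+1)(2m+3)(α₂u + ρ(λu³/3 + α₀u²/2 + x₀))
             - A₀²ρ^{2m+3}(m(λu+α₀) + λu + 3α₀/2)] / (ρ(2m²+5m+3))
   give vanishing pullbacks of ω₁ = ρdt∧du + udt∧dρ - dx∧dρ and
   ω₂ = udt∧du + ρA₀²ρ^{2m}dt∧dρ - dx∧du under (u,ρ) ↦ (t(u,ρ),x(u,ρ),u,ρ):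
   the du∧dρ coefficients u·t_u - ρ·t_ρ - x_u and -u·t_ρ + A₀²ρ^{2m+1}·t_u + x_ρ
   vanish for ρ > 0. -/

noncomputable def pd1 (f : ℝ → ℝ → ℝ) (a b : ℝ) : ℝ := deriv (fun x => f x b) a

noncomputable def pd2 (f : ℝ → ℝ → ℝ) (a b : ℝ) : ℝ := deriv (fun y => f a y) b

noncomputable def tIdeal (A0 m lam a0 a2 t0 : ℝ) (u r : ℝ) : ℝ :=
  lam * u ^ 2 / 2 + a0 * u + a2 / r
    + lam * A0 ^ 2 * r ^ (2 * m + 2) / (2 * (2 * m ^ 2 + 5 * m + 3)) + t0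

noncomputable def xIdeal (A0 m lam a0 x0 a2 : ℝ) (u r : ℝ) : ℝ :=
  ((m + 1) * (2 * m + 3) * (a2 * u + r * (lam * u ^ 3 / 3 + a0 * u ^ 2 / 2 + x0))
      - A0 ^ 2 * r ^ (2 * m + 3) * (m * (lam * u + a0) + lam * u + 3 * a0 / 2))
    / (r * (2 * m ^ 2 + 5 * m + 3))

set_option maxHeartbeats 1000000 in
theorem ideal_gas_multivalued_solution
    (A0 m lam a0 a2 t0 x0 : ℝ) (hA0 : 0 < A0) (hm : -(3 / 2 : ℝ) < m)
    (hm' : m ≠ -1) :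
    ∀ u r : ℝ, 0 < r →
      u * pd1 (tIdeal A0 m lam a0 a2 t0) u r
          - r * pd2 (tIdeal A0 m lam a0 a2 t0) u r
          - pd1 (xIdeal A0 m lam a0 x0 a2) u r = 0 ∧
      -u * pd2 (tIdeal A0 m lam a0 a2 t0) u r
          + A0 ^ 2 * r ^ (2 * m + 1) * pd1 (tIdeal A0 m lam a0 a2 t0) u r
          + pd2 (xIdeal A0 m lam a0 x0 a2) u r = 0 := by
  have hm1 : m + 1 ≠ 0 := fun h => hm' (by linarith)
  have h23 : (2 * m + 3 : ℝ) ≠ 0 := by intro h; nlinarith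
  have hD : (2 * m ^ 2 + 5 * m + 3 : ℝ) ≠ 0 := by
    have h : (2 * m ^ 2 + 5 * m + 3 : ℝ) = (m + 1) * (2 * m + 3) := by ring
    rw [h]; exact mul_ne_zero hm1 h23
  intro u r hr
  have hrne : r ≠ 0 := ne_of_gt hr
  have hS21 : r ^ (2 * m + 2) = r ^ (2 * m + 1) * r := by
    rw [show (2 * m + 2 : ℝ) = (2 * m + 1) + 1 by ring, Real.rpow_add_one hrne]
  -- splitting lemma for xIdeal
  have hxsplit : ∀ u' r' : ℝ, r' ≠ 0 →
      xIdeal A0 m lam a0 x0 a2 u' r'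
        = lam / 3 * u' ^ 3 + a0 / 2 * u' ^ 2
          + (a2 / r' - A0 ^ 2 * r' ^ (2 * m + 2) / (2 * m ^ 2 + 5 * m + 3)
              * ((m + 1) * lam)) * u'
          + (x0 - A0 ^ 2 * r' ^ (2 * m + 2) / (2 * m ^ 2 + 5 * m + 3)
              * (m * a0 + 3 * a0 / 2)) := by
    intro u' r' hr'
    have hsplit' : r' ^ (2 * m + 3) = r' ^ (2 * m + 2) * r' := by
      rw [show (2 * m + 3 : ℝ) = (2 * m + 2) + 1 by ring, Real.rpow_add_one hr']
    unfold xIdeal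
    rw [hsplit']
    obtain ⟨D, hDe⟩ : ∃ D, D = 2 * m ^ 2 + 5 * m + 3 := ⟨_, rfl⟩
    rw [← hDe] at hD ⊢
    field_simp
    subst hDe
    ring
  -- pd1 of t
  have ht1 : pd1 (tIdeal A0 m lam a0 a2 t0) u r = lam * u + a0 := by
    have h1 : HasDerivAt (fun u : ℝ => lam * u ^ 2 / 2) (lam * u) u := by
      have h := ((hasDerivAt_pow 2 u).const_mul lam).div_const 2
      exact h.congr_deriv (by push_cast; ring)
    have h2 : HasDerivAt (fun u : ℝ => a0 * u) a0 u := by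
      simpa using (hasDerivAt_id u).const_mul a0
    have h := ((((h1.add h2).add_const (a2 / r)).add_const
      (lam * A0 ^ 2 * r ^ (2 * m + 2) / (2 * (2 * m ^ 2 + 5 * m + 3)))).add_const t0)
    have h' : HasDerivAt (fun u => tIdeal A0 m lam a0 a2 t0 u r) (lam * u + a0) u := by
      unfold tIdeal
      exact h
    exact h'.deriv
  -- rpow derivative
  have hrpow : HasDerivAt (fun r : ℝ => r ^ (2 * m + 2))
      ((2 * m + 2) * r ^ (2 * m + 1)) r := by
    have h := Real.hasDerivAt_rpow_const (p := 2 * m + 2) (Or.inl hrne)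
    simpa [show (2 * m + 2 : ℝ) - 1 = 2 * m + 1 by ring] using h
  have hinv : ∀ c : ℝ, HasDerivAt (fun r : ℝ => c / r) (-(c / r ^ 2)) r := by
    intro c
    have h := (hasDerivAt_inv hrne).const_mul c
    have e : -(c / r ^ 2) = c * -(r ^ 2)⁻¹ := by field_simp
    rw [e]
    simpa [div_eq_mul_inv] using h
  -- pd2 of t
  have ht2 : pd2 (tIdeal A0 m lam a0 a2 t0) u r
      = -(a2 / r ^ 2) + lam * A0 ^ 2 * ((2 * m + 2) * r ^ (2 * m + 1))
          / (2 * (2 * m ^ 2 + 5 * m + 3)) := by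
    have h2 : HasDerivAt
        (fun r : ℝ => lam * A0 ^ 2 * r ^ (2 * m + 2) / (2 * (2 * m ^ 2 + 5 * m + 3)))
        (lam * A0 ^ 2 * ((2 * m + 2) * r ^ (2 * m + 1)) / (2 * (2 * m ^ 2 + 5 * m + 3))) r :=
      (hrpow.const_mul (lam * A0 ^ 2)).div_const _
    have h := ((((hinv a2).const_add (lam * u ^ 2 / 2 + a0 * u)).add h2).add_const t0)
    have h' : HasDerivAt (fun r => tIdeal A0 m lam a0 a2 t0 u r)
        (-(a2 / r ^ 2) + lam * A0 ^ 2 * ((2 * m + 2) * r ^ (2 * m + 1))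
          / (2 * (2 * m ^ 2 + 5 * m + 3))) r := by
      unfold tIdeal
      exact h
    exact h'.deriv
  -- pd1 of x
  have hx1 : pd1 (xIdeal A0 m lam a0 x0 a2) u r
      = lam * u ^ 2 + a0 * u
        + (a2 / r - A0 ^ 2 * r ^ (2 * m + 2) / (2 * m ^ 2 + 5 * m + 3)
            * ((m + 1) * lam)) := by
    have hfun : (fun u' => xIdeal A0 m lam a0 x0 a2 u' r)
        = fun u' : ℝ => lam / 3 * u' ^ 3 + a0 / 2 * u' ^ 2
            + (a2 / r - A0 ^ 2 * r ^ (2 * m + 2) / (2 * m ^ 2 + 5 * m + 3)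
                * ((m + 1) * lam)) * u'
            + (x0 - A0 ^ 2 * r ^ (2 * m + 2) / (2 * m ^ 2 + 5 * m + 3)
                * (m * a0 + 3 * a0 / 2)) := funext fun u' => hxsplit u' r hrne
    have h1 : HasDerivAt (fun u' : ℝ => lam / 3 * u' ^ 3) (lam * u ^ 2) u := by
      have h := (hasDerivAt_pow 3 u).const_mul (lam / 3)
      exact h.congr_deriv (by push_cast; ring)
    have h2 : HasDerivAt (fun u' : ℝ => a0 / 2 * u' ^ 2) (a0 * u) u := by
      have h := (hasDerivAt_pow 2 u).const_mul (a0 / 2)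
      exact h.congr_deriv (by push_cast; ring)
    have h3 : HasDerivAt (fun u' : ℝ =>
        (a2 / r - A0 ^ 2 * r ^ (2 * m + 2) / (2 * m ^ 2 + 5 * m + 3) * ((m + 1) * lam)) * u')
        (a2 / r - A0 ^ 2 * r ^ (2 * m + 2) / (2 * m ^ 2 + 5 * m + 3) * ((m + 1) * lam)) u := by
      simpa using (hasDerivAt_id u).const_mul
        (a2 / r - A0 ^ 2 * r ^ (2 * m + 2) / (2 * m ^ 2 + 5 * m + 3) * ((m + 1) * lam))
    have h := ((h1.add h2).add h3).add_const
      (x0 - A0 ^ 2 * r ^ (2 * m + 2) / (2 * m ^ 2 + 5 * m + 3) * (m * a0 + 3 * a0 / 2))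
    unfold pd1
    rw [hfun]
    exact h.deriv
  -- pd2 of x
  have hx2 : pd2 (xIdeal A0 m lam a0 x0 a2) u r
      = -(a2 * u / r ^ 2)
        - A0 ^ 2 * ((m + 1) * lam * u + (m * a0 + 3 * a0 / 2))
            / (2 * m ^ 2 + 5 * m + 3) * ((2 * m + 2) * r ^ (2 * m + 1)) := by
    have hev : (fun r' => xIdeal A0 m lam a0 x0 a2 u r')
        =ᶠ[nhds r] fun r' : ℝ => a2 * u / r'
            - A0 ^ 2 * ((m + 1) * lam * u + (m * a0 + 3 * a0 / 2))
                / (2 * m ^ 2 + 5 * m + 3) * r' ^ (2 * m + 2)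
            + (lam / 3 * u ^ 3 + a0 / 2 * u ^ 2 + x0) := by
      filter_upwards [eventually_gt_nhds hr] with r' hr'
      rw [hxsplit u r' (ne_of_gt hr')]
      field_simp
      ring
    have h2 : HasDerivAt
        (fun r' : ℝ => A0 ^ 2 * ((m + 1) * lam * u + (m * a0 + 3 * a0 / 2))
            / (2 * m ^ 2 + 5 * m + 3) * r' ^ (2 * m + 2))
        (A0 ^ 2 * ((m + 1) * lam * u + (m * a0 + 3 * a0 / 2))
            / (2 * m ^ 2 + 5 * m + 3) * ((2 * m + 2) * r ^ (2 * m + 1))) r := by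
      have h := hrpow.const_mul
        (A0 ^ 2 * ((m + 1) * lam * u + (m * a0 + 3 * a0 / 2)) / (2 * m ^ 2 + 5 * m + 3))
      convert h using 1
    have h := (((hinv (a2 * u)).sub h2).add_const
      (lam / 3 * u ^ 3 + a0 / 2 * u ^ 2 + x0))
    unfold pd2
    rw [hev.deriv_eq]; exact h.deriv
  rw [ht1, ht2, hx1, hx2]
  rw [hS21]
  set P := r ^ (2 * m + 1) with hP
  constructor
  · field_simp
    ring
  · obtain ⟨D, hDe⟩ : ∃ D, D = 2 * m ^ 2 + 5 * m + 3 := ⟨_, rfl⟩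
    rw [← hDe] at hD ⊢
    field_simp
    subst hDe
    ring
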